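/- Let r and k be integers with 0 ≤ r ≤ k, let S be a sum of r terms of the form ε·3^a with ε ∈ {±1,±2} and a an integer, and let Δ be a rational with |Δ| ≤ (k-r)/3^k. Then |(S + Δ) - 1/2| ≥ 1/(2·3^k). -/

import Mathlib

/-!
For `r` terms `ε * 3 ^ a` with `|ε| ≤ 2` one shows `|S - 1/2| ≥ 1 / (2 * 3 ^ r)` by induction on `r`.
If every exponent is at least `-r`, then `3 ^ r * S` is an integer, so `2 * 3 ^ r * (S - 1/2)` is
an odd integer. Otherwise some term has exponent `≤ -(r + 1)`, hence size at most
`2 / 3 ^ (r + 1)`, and dropping it costs less than the gap `1 / 3 ^ r` between the bounds for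
`r - 1` and `r` terms. The perturbation `Δ` is then absorbed by Bernoulli's inequality
`3 ^ m ≥ 2 m + 1` with `m = k - r`.
-/

open Finset

lemma abs_sub_sub_abs_le_abs_add_sub {α : Type*} [AddCommGroup α] [LinearOrder α]
    [IsOrderedAddMonoid α] (x y c : α) : |y - c| - |x| ≤ |x + y - c| := by
  have h := abs_sub_abs_le_abs_sub (y - c) (-x)
  rwa [abs_neg, sub_neg_eq_add, sub_add_eq_add_sub, add_comm y] at h

lemma one_div_two_mul_three_pow_le_abs_sub_half {q : ℚ} {c : ℕ} {N : ℤ} (hN : q * 3 ^ c = N) :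
    1 / (2 * 3 ^ c) ≤ |q - 1 / 2| := by
  have hodd : Odd (2 * N - 3 ^ c) := (even_two_mul N).sub_odd (Odd.pow (by decide))
  have hne : 2 * N - 3 ^ c ≠ 0 := by
    rintro h
    rw [h] at hodd
    exact Int.not_even_iff_odd.2 hodd Even.zero
  have hone : (1 : ℚ) ≤ |2 * (q * 3 ^ c) - 3 ^ c| := by
    rw [hN]
    exact_mod_cast Int.one_le_abs hne
  have hpos : (0 : ℚ) < 2 * 3 ^ c := by positivity
  rw [div_le_iff₀ hpos, ← abs_of_pos hpos, ← abs_mul]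
  rwa [show (q - 1 / 2) * (2 * 3 ^ c) = 2 * (q * 3 ^ c) - 3 ^ c by ring]

lemma exists_int_sum_mul_three_zpow_mul_pow_eq {ι : Type*} (s : Finset ι) (ε a : ι → ℤ) {c : ℕ}
    (ha : ∀ i ∈ s, -(c : ℤ) ≤ a i) :
    ∃ N : ℤ, (∑ i ∈ s, (ε i : ℚ) * 3 ^ a i) * 3 ^ c = N := by
  refine ⟨∑ i ∈ s, ε i * 3 ^ (a i + c).toNat, ?_⟩
  push_cast
  rw [sum_mul]
  refine sum_congr rfl fun i hi => ?_
  rw [mul_assoc, ← zpow_natCast, ← zpow_natCast, ← zpow_add₀ three_ne_zero,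
    Int.toNat_of_nonneg (by linarith [ha i hi])]

lemma abs_mul_three_zpow_le {e a : ℤ} {n : ℕ} (he : |e| ≤ 2) (ha : a < -(n + 1 : ℕ)) :
    |(e : ℚ) * 3 ^ a| ≤ 2 / (9 * 3 ^ n) := by
  have h3 : (3 : ℚ) ^ a ≤ 1 / (9 * 3 ^ n) := by
    calc (3 : ℚ) ^ a ≤ 3 ^ (-(n + 2 : ℕ) : ℤ) := zpow_le_zpow_right₀ (by norm_num) (by omega)
      _ = 1 / (9 * 3 ^ n) := by rw [zpow_neg, zpow_natCast, pow_add]; ring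
  have he' : |(e : ℚ)| ≤ 2 := by exact_mod_cast he
  rw [abs_mul, abs_of_pos (zpow_pos three_pos a : (0 : ℚ) < 3 ^ a)]
  calc |(e : ℚ)| * 3 ^ a ≤ 2 * (1 / (9 * 3 ^ n)) := by gcongr
    _ = 2 / (9 * 3 ^ n) := by ring

theorem one_div_two_mul_three_pow_card_le_abs_sum_sub_half {ι : Type*} [DecidableEq ι]
    (s : Finset ι) (ε a : ι → ℤ) (hε : ∀ i ∈ s, |ε i| ≤ 2) :
    1 / (2 * 3 ^ #s) ≤ |∑ i ∈ s, (ε i : ℚ) * 3 ^ a i - 1 / 2| := by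
  induction hn : #s generalizing s with
  | zero => simp_all
  | succ n ih =>
    by_cases ha : ∀ i ∈ s, -((n + 1 : ℕ) : ℤ) ≤ a i
    · obtain ⟨N, hN⟩ := exists_int_sum_mul_three_zpow_mul_pow_eq s ε a ha
      exact one_div_two_mul_three_pow_le_abs_sub_half hN
    push Not at ha
    obtain ⟨j, hj, hsmall⟩ := ha
    have hrest := ih (s.erase j) (fun i hi => hε i (mem_of_mem_erase hi))
      (by rw [card_erase_of_mem hj, hn]; rfl)
    have hterm := abs_mul_three_zpow_le (hε j hj) hsmall
    have htri := abs_sub_sub_abs_le_abs_add_sub ((ε j : ℚ) * 3 ^ a j)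
      (∑ i ∈ s.erase j, (ε i : ℚ) * 3 ^ a i) (1 / 2)
    rw [← add_sum_erase s _ hj]
    calc (1 : ℚ) / (2 * 3 ^ (n + 1)) ≤ 1 / (2 * 3 ^ n) - 2 / (9 * 3 ^ n) := by
          rw [pow_succ]; field_simp; norm_num
      _ ≤ _ := by linarith

lemma div_three_pow_add_add_one_div_le (r m : ℕ) :
    (m : ℚ) / 3 ^ (r + m) + 1 / (2 * 3 ^ (r + m)) ≤ 1 / (2 * 3 ^ r) := by
  have hbern : 1 + (m : ℚ) * 2 ≤ 3 ^ m := by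
    simpa [show (1 : ℚ) + 2 = 3 by norm_num] using
      one_add_mul_le_pow (by norm_num : (-2 : ℚ) ≤ 2) m
  rw [pow_add]
  field_simp
  linarith

theorem stmt_16 (r k : ℕ) (hrk : r ≤ k) (a : Fin r → ℤ) (ε : Fin r → ℤ)
    (hε : ∀ i, ε i = -2 ∨ ε i = -1 ∨ ε i = 1 ∨ ε i = 2) (Δ : ℚ)
    (hΔ : |Δ| ≤ ((k : ℚ) - (r : ℚ)) / 3 ^ k) :
    |(∑ i, (ε i : ℚ) * (3 : ℚ) ^ (a i)) + Δ - 1/2| ≥ 1 / (2 * 3 ^ k) := by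
  obtain ⟨m, rfl⟩ := Nat.exists_eq_add_of_le hrk
  have hε' : ∀ i ∈ univ, |ε i| ≤ 2 := fun i _ => by
    rcases hε i with h | h | h | h <;> simp [h]
  have hS := one_div_two_mul_three_pow_card_le_abs_sum_sub_half univ ε a hε'
  rw [card_univ, Fintype.card_fin] at hS
  push_cast at hΔ
  rw [add_sub_cancel_left] at hΔ
  rw [add_comm _ Δ]
  linarith [abs_sub_sub_abs_le_abs_add_sub Δ (∑ i, (ε i : ℚ) * 3 ^ a i) (1 / 2),
    div_three_pow_add_add_one_div_le r m]
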